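/- Let R be a strongly G-graded algebra with A = R_1 and let T̃ be a G-graded R-module with identity component T = T̃_1. Then for every g ∈ G and every G-graded R-module M there is a natural k-module isomorphism Hom_{R-Gr}(T̃, M(g)) ≅ Hom_A(T, R_g ⊗_A M_1), and consequently Hom_R(T̃, M) ≅ ⊕_{g∈G} Hom_A(T, R_g ⊗_A M_1) when T̃ is finitely generated. -/

import Mathlib

set_option linter.unusedVariables false
set_option linter.unusedSectionVars false
set_option synthInstance.maxHeartbeats 1000000
set_option maxHeartbeats 1000000
/-! ### Library: basics on group-graded algebras.
The group `G` is written additively (an additive group is the same thing as a group);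
the identity component is `ℛ 0`. -/

section GradedLib

variable {k R G : Type*} [CommRing k] [Ring R] [Algebra k R] [AddGroup G]
variable (ℛ : G → Submodule k R) [SetLike.GradedMonoid ℛ]

/-- `R` is *strongly graded* if `ℛ g * ℛ h = ℛ (g + h)` for all `g h`. -/
def IsStronglyGraded : Prop := ∀ g h : G, ℛ g * ℛ h = ℛ (g + h)

namespace GrComp

variable {ℛ}

lemma mul_mem_shift {g h : G} {x y : R} (hx : x ∈ ℛ g) (hy : y ∈ ℛ h) :
    x * y ∈ ℛ (g + h) := SetLike.GradedMul.mul_mem hx hy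

variable (ℛ)

/-- Left action of the identity component on each component, by multiplication. -/
instance instSMul (g : G) : SMul ↥(ℛ 0) ↥(ℛ g) :=
  ⟨fun a x => ⟨(a : R) * (x : R), by
    have := mul_mem_shift a.2 x.2; rwa [zero_add] at this⟩⟩

@[simp] lemma coe_smul (g : G) (a : ↥(ℛ 0)) (x : ↥(ℛ g)) :
    ((a • x : ↥(ℛ g)) : R) = (a : R) * (x : R) := rfl

/-- Each component is a left module over the identity component. -/
instance instModule (g : G) : Module ↥(ℛ 0) ↥(ℛ g) where
  one_smul x := Subtype.ext (one_mul (x : R))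
  mul_smul a b x := Subtype.ext (mul_assoc (a : R) (b : R) (x : R))
  smul_zero a := Subtype.ext (mul_zero (a : R))
  smul_add a x y := Subtype.ext (mul_add (a : R) (x : R) (y : R))
  add_smul a b x := Subtype.ext (add_mul (a : R) (b : R) (x : R))
  zero_smul x := Subtype.ext (zero_mul (x : R))

/-- Right action of the identity component on each component, by multiplication. -/
instance instSMulOp (g : G) : SMul (↥(ℛ 0))ᵐᵒᵖ ↥(ℛ g) :=
  ⟨fun a x => ⟨(x : R) * (a.unop : R), by
    have := mul_mem_shift x.2 a.unop.2; rwa [add_zero] at this⟩⟩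

@[simp] lemma coe_smul_op (g : G) (a : (↥(ℛ 0))ᵐᵒᵖ) (x : ↥(ℛ g)) :
    ((a • x : ↥(ℛ g)) : R) = (x : R) * (a.unop : R) := rfl

/-- Each component is a right module over the identity component. -/
instance instModuleOp (g : G) : Module (↥(ℛ 0))ᵐᵒᵖ ↥(ℛ g) where
  one_smul x := Subtype.ext (mul_one (x : R))
  mul_smul a b x := Subtype.ext (mul_assoc (x : R) (b.unop : R) (a.unop : R)).symm
  smul_zero a := Subtype.ext (zero_mul _)
  smul_add a x y := Subtype.ext (add_mul (x : R) (y : R) (a.unop : R))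
  add_smul a b x := Subtype.ext (mul_add (x : R) (a.unop : R) (b.unop : R))
  zero_smul x := Subtype.ext (mul_zero (x : R))

/-- The two actions commute: components are bimodules. -/
instance instSMulCommClass (g : G) :
    SMulCommClass ↥(ℛ 0) (↥(ℛ 0))ᵐᵒᵖ ↥(ℛ g) :=
  ⟨fun a b x => Subtype.ext (mul_assoc (a : R) (x : R) (b.unop : R)).symm⟩

end GrComp

end GradedLib

section RAsBimodule

variable {k R G : Type*} [CommRing k] [Ring R] [Algebra k R] [AddGroup G]
variable (ℛ : G → Submodule k R) [SetLike.GradedMonoid ℛ]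

/-- The identity component acts on `R` on the left, by multiplication. -/
instance GrComp.instModuleSelfLeft : Module ↥(ℛ 0) R where
  smul a r := (a : R) * r
  one_smul r := one_mul r
  mul_smul a b r := mul_assoc (a : R) (b : R) r
  smul_zero a := mul_zero (a : R)
  smul_add a r s := mul_add (a : R) r s
  add_smul a b r := add_mul (a : R) (b : R) r
  zero_smul r := zero_mul r

@[simp] lemma GrComp.smul_self_left_def (a : ↥(ℛ 0)) (r : R) :
    a • r = (a : R) * r := rfl

/-- The identity component acts on `R` on the right, by multiplication. -/
instance GrComp.instModuleSelfRight : Module (↥(ℛ 0))ᵐᵒᵖ R where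
  smul a r := r * (a.unop : R)
  one_smul r := mul_one r
  mul_smul a b r := (mul_assoc r (b.unop : R) (a.unop : R)).symm
  smul_zero a := zero_mul _
  smul_add a r s := add_mul r s (a.unop : R)
  add_smul a b r := mul_add r (a.unop : R) (b.unop : R)
  zero_smul r := mul_zero r

@[simp] lemma GrComp.smul_self_right_def (a : (↥(ℛ 0))ᵐᵒᵖ) (r : R) :
    a • r = r * (a.unop : R) := rfl

instance GrComp.instSMulCommClassSelf :
    SMulCommClass R (↥(ℛ 0))ᵐᵒᵖ R :=
  ⟨fun r a x => (mul_assoc r x (a.unop : R)).symm⟩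

instance GrComp.instSMulCommClassSelf' :
    SMulCommClass ↥(ℛ 0) (↥(ℛ 0))ᵐᵒᵖ R :=
  ⟨fun a b x => (mul_assoc (a : R) x (b.unop : R)).symm⟩

end RAsBimodule
/-! ### Library: tensor product `M ⊗[A] N` over a possibly noncommutative ring `A`,
for a right `A`-module `M` and a left `A`-module `N`, realized as a quotient of `M ⊗[ℤ] N`. -/

noncomputable section NCTensorLib

open TensorProduct MulOpposite

/-- The subgroup of relations defining the balanced tensor product. -/
def NCT.rels (A : Type*) [Ring A] (M N : Type*) [AddCommGroup M] [AddCommGroup N]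
    [Module Aᵐᵒᵖ M] [Module A N] : AddSubgroup (M ⊗[ℤ] N) :=
  AddSubgroup.closure
    {z | ∃ (a : A) (m : M) (n : N), z = (op a • m) ⊗ₜ[ℤ] n - m ⊗ₜ[ℤ] (a • n)}

/-- The tensor product over `A` of a right `A`-module and a left `A`-module. -/
def NCT (A : Type*) [Ring A] (M N : Type*) [AddCommGroup M] [AddCommGroup N]
    [Module Aᵐᵒᵖ M] [Module A N] : Type _ :=
  (M ⊗[ℤ] N) ⧸ NCT.rels A M N

namespace NCT

variable {A : Type*} [Ring A] {M N : Type*} [AddCommGroup M] [AddCommGroup N]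
  [Module Aᵐᵒᵖ M] [Module A N]

instance : AddCommGroup (NCT A M N) :=
  QuotientAddGroup.Quotient.addCommGroup _

/-- The canonical generator `m ⊗ n` of `NCT A M N`. -/
def mk (A : Type*) [Ring A] {M N : Type*} [AddCommGroup M] [AddCommGroup N]
    [Module Aᵐᵒᵖ M] [Module A N] (m : M) (n : N) : NCT A M N :=
  QuotientAddGroup.mk (m ⊗ₜ[ℤ] n)

lemma mk_balanced (a : A) (m : M) (n : N) :
    mk A (op a • m) n = mk A m (a • n) := by
  refine QuotientAddGroup.eq.2 ?_
  have : -((op a • m) ⊗ₜ[ℤ] n) + m ⊗ₜ[ℤ] (a • n)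
      = -((op a • m) ⊗ₜ[ℤ] n - m ⊗ₜ[ℤ] (a • n)) := by abel
  rw [this]
  exact neg_mem (AddSubgroup.subset_closure ⟨a, m, n, rfl⟩)

lemma mk_add_left (m m' : M) (n : N) :
    mk A (m + m') n = mk A m n + mk A m' n := by
  show QuotientAddGroup.mk _ = _
  rw [add_tmul]; rfl

lemma mk_add_right (m : M) (n n' : N) :
    mk A m (n + n') = mk A m n + mk A m n' := by
  show QuotientAddGroup.mk _ = _
  rw [tmul_add]; rfl

section LeftModule

variable {C : Type*} [Ring C] [Module C M] [SMulCommClass C Aᵐᵒᵖ M]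

/-- Auxiliary endomorphism of `M ⊗[ℤ] N` induced by the action of `c : C` on `M`. -/
def lAux (N : Type*) [AddCommGroup N] (c : C) : (M ⊗[ℤ] N) →ₗ[ℤ] (M ⊗[ℤ] N) :=
  TensorProduct.map (DistribMulAction.toAddMonoidHom M c).toIntLinearMap LinearMap.id

lemma lAux_tmul (c : C) (m : M) (n : N) :
    lAux N c (m ⊗ₜ[ℤ] n) = (c • m) ⊗ₜ[ℤ] n := rfl

lemma rels_le_comap_lAux (A : Type*) [Ring A] [Module Aᵐᵒᵖ M] [Module A N]
    [SMulCommClass C Aᵐᵒᵖ M] (c : C) :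
    NCT.rels A M N ≤ (NCT.rels A M N).comap (lAux N c).toAddMonoidHom := by
  refine (AddSubgroup.closure_le _).2 ?_
  rintro z ⟨a, m, n, rfl⟩
  refine AddSubgroup.mem_comap.2 ?_
  have h : lAux N c ((op a • m) ⊗ₜ[ℤ] n - m ⊗ₜ[ℤ] (a • n))
      = (op a • (c • m)) ⊗ₜ[ℤ] n - (c • m) ⊗ₜ[ℤ] (a • n) := by
    rw [map_sub, lAux_tmul, lAux_tmul, smul_comm]
  rw [LinearMap.toAddMonoidHom_coe, h]
  exact AddSubgroup.subset_closure ⟨a, c • m, n, rfl⟩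

/-- The action of `c : C` on the balanced tensor product, via the left factor. -/
def lsmul (c : C) : NCT A M N →+ NCT A M N :=
  QuotientAddGroup.map _ _ (lAux N c).toAddMonoidHom (rels_le_comap_lAux A c)

lemma lsmul_mk (c : C) (m : M) (n : N) :
    lsmul c (mk A m n) = mk A (c • m) n := by
  show QuotientAddGroup.mk _ = _
  rfl

instance instModuleLeft : Module C (NCT A M N) where
  smul c x := lsmul c x
  one_smul x := by
    refine QuotientAddGroup.induction_on x (fun z => ?_)
    show QuotientAddGroup.mk (lAux N (1 : C) z) = QuotientAddGroup.mk z
    congr 1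
    have h1 : lAux (M := M) N (1 : C) = LinearMap.id := by
      apply TensorProduct.ext'
      intro m n
      show ((1 : C) • m) ⊗ₜ[ℤ] n = m ⊗ₜ[ℤ] n
      rw [one_smul]
    rw [h1]; rfl
  mul_smul c d x := by
    refine QuotientAddGroup.induction_on x (fun z => ?_)
    show QuotientAddGroup.mk (lAux N (c * d) z)
      = QuotientAddGroup.mk (lAux N c (lAux N d z))
    congr 1
    have h1 : lAux (M := M) N (c * d) = (lAux N c).comp (lAux N d) := by
      apply TensorProduct.ext'
      intro m n
      show ((c * d) • m) ⊗ₜ[ℤ] n = (c • d • m) ⊗ₜ[ℤ] n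
      rw [mul_smul]
    rw [h1]; rfl
  smul_zero c := map_zero (lsmul (A := A) (M := M) (N := N) c)
  smul_add c x y := map_add (lsmul (A := A) (M := M) (N := N) c) x y
  add_smul c d x := by
    refine QuotientAddGroup.induction_on x (fun z => ?_)
    show QuotientAddGroup.mk (lAux N (c + d) z)
      = QuotientAddGroup.mk (lAux N c z) + QuotientAddGroup.mk (lAux N d z)
    have h1 : lAux (M := M) N (c + d) = lAux N c + lAux N d := by
      apply TensorProduct.ext'
      intro m n
      show ((c + d) • m) ⊗ₜ[ℤ] n = (c • m) ⊗ₜ[ℤ] n + (d • m) ⊗ₜ[ℤ] n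
      rw [add_smul, add_tmul]
    rw [h1]; rfl
  zero_smul x := by
    refine QuotientAddGroup.induction_on x (fun z => ?_)
    show QuotientAddGroup.mk (lAux N (0 : C) z) = 0
    have h1 : lAux (M := M) N (0 : C) = 0 := by
      apply TensorProduct.ext'
      intro m n
      show ((0 : C) • m) ⊗ₜ[ℤ] n = 0
      rw [zero_smul, zero_tmul]
    rw [h1]; rfl

lemma smul_mk (c : C) (m : M) (n : N) :
    c • mk A m n = mk A (c • m) n := lsmul_mk c m n

end LeftModule

section RightModule

variable {C : Type*} [Ring C] [Module C N] [SMulCommClass A C N]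

/-- Auxiliary endomorphism of `M ⊗[ℤ] N` induced by the action of `c : C` on `N`. -/
def rAux (M : Type*) [AddCommGroup M] (c : C) : (M ⊗[ℤ] N) →ₗ[ℤ] (M ⊗[ℤ] N) :=
  TensorProduct.map LinearMap.id (DistribMulAction.toAddMonoidHom N c).toIntLinearMap

lemma rAux_tmul (c : C) (m : M) (n : N) :
    rAux M c (m ⊗ₜ[ℤ] n) = m ⊗ₜ[ℤ] (c • n) := rfl

lemma rels_le_comap_rAux (c : C) :
    NCT.rels A M N ≤ (NCT.rels A M N).comap (rAux M c).toAddMonoidHom := by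
  refine (AddSubgroup.closure_le _).2 ?_
  rintro z ⟨a, m, n, rfl⟩
  refine AddSubgroup.mem_comap.2 ?_
  have h : rAux M c ((op a • m) ⊗ₜ[ℤ] n - m ⊗ₜ[ℤ] (a • n))
      = (op a • m) ⊗ₜ[ℤ] (c • n) - m ⊗ₜ[ℤ] (a • (c • n)) := by
    rw [map_sub, rAux_tmul, rAux_tmul, ← smul_comm a c n]
  rw [LinearMap.toAddMonoidHom_coe, h]
  exact AddSubgroup.subset_closure ⟨a, m, c • n, rfl⟩

/-- The action of `c : C` on the balanced tensor product, via the right factor. -/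
def rsmul (c : C) : NCT A M N →+ NCT A M N :=
  QuotientAddGroup.map _ _ (rAux M c).toAddMonoidHom (rels_le_comap_rAux c)

lemma rsmul_mk (c : C) (m : M) (n : N) :
    rsmul c (mk A m n) = mk A m (c • n) := by
  show QuotientAddGroup.mk _ = _
  rfl

instance instModuleRight : Module C (NCT A M N) where
  smul c x := rsmul c x
  one_smul x := by
    refine QuotientAddGroup.induction_on x (fun z => ?_)
    show QuotientAddGroup.mk (rAux M (1 : C) z) = QuotientAddGroup.mk z
    congr 1
    have h1 : rAux (N := N) M (1 : C) = LinearMap.id := by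
      apply TensorProduct.ext'
      intro m n
      show m ⊗ₜ[ℤ] ((1 : C) • n) = m ⊗ₜ[ℤ] n
      rw [one_smul]
    rw [h1]; rfl
  mul_smul c d x := by
    refine QuotientAddGroup.induction_on x (fun z => ?_)
    show QuotientAddGroup.mk (rAux M (c * d) z)
      = QuotientAddGroup.mk (rAux M c (rAux M d z))
    congr 1
    have h1 : rAux (N := N) M (c * d) = (rAux M c).comp (rAux M d) := by
      apply TensorProduct.ext'
      intro m n
      show m ⊗ₜ[ℤ] ((c * d) • n) = m ⊗ₜ[ℤ] (c • d • n)
      rw [mul_smul]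
    rw [h1]; rfl
  smul_zero c := map_zero (rsmul (A := A) (M := M) (N := N) c)
  smul_add c x y := map_add (rsmul (A := A) (M := M) (N := N) c) x y
  add_smul c d x := by
    refine QuotientAddGroup.induction_on x (fun z => ?_)
    show QuotientAddGroup.mk (rAux M (c + d) z)
      = QuotientAddGroup.mk (rAux M c z) + QuotientAddGroup.mk (rAux M d z)
    have h1 : rAux (N := N) M (c + d) = rAux M c + rAux M d := by
      apply TensorProduct.ext'
      intro m n
      show m ⊗ₜ[ℤ] ((c + d) • n) = m ⊗ₜ[ℤ] (c • n) + m ⊗ₜ[ℤ] (d • n)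
      rw [add_smul, tmul_add]
    rw [h1]; rfl
  zero_smul x := by
    refine QuotientAddGroup.induction_on x (fun z => ?_)
    show QuotientAddGroup.mk (rAux M (0 : C) z) = 0
    have h1 : rAux (N := N) M (0 : C) = 0 := by
      apply TensorProduct.ext'
      intro m n
      show m ⊗ₜ[ℤ] ((0 : C) • n) = 0
      rw [zero_smul, tmul_zero]
    rw [h1]; rfl

lemma smul_mk_right (c : C) (m : M) (n : N) :
    c • mk A m n = mk A m (c • n) := rsmul_mk c m n

end RightModule

section CommClass

/-- The module structures on `NCT A M N` coming from the two factors commute. -/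
instance instSMulCommClassLR
    {C : Type*} [Ring C] [Module C M] [SMulCommClass C Aᵐᵒᵖ M]
    {C' : Type*} [Ring C'] [Module C' N] [SMulCommClass A C' N] :
    SMulCommClass C C' (NCT A M N) where
  smul_comm c c' x := by
    refine QuotientAddGroup.induction_on x (fun z => ?_)
    show (QuotientAddGroup.mk (lAux N c (rAux M c' z)) : NCT A M N)
      = (QuotientAddGroup.mk (rAux M c' (lAux N c z)) : NCT A M N)
    congr 1
    have h : (lAux (M := M) N c).comp (rAux (N := N) M c')
        = (rAux (N := N) M c').comp (lAux (M := M) N c) := by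
      apply TensorProduct.ext'
      intro m n
      rfl
    exact LinearMap.congr_fun h z

end CommClass

section Map

variable {N' : Type*} [AddCommGroup N'] [Module A N']

/-- Functoriality of the balanced tensor product in the right variable. -/
def mapRight (f : N →ₗ[A] N') : NCT A M N →+ NCT A M N' :=
  QuotientAddGroup.map _ _
    (TensorProduct.map LinearMap.id f.toAddMonoidHom.toIntLinearMap).toAddMonoidHom
    (by
      refine (AddSubgroup.closure_le _).2 ?_
      rintro z ⟨a, m, n, rfl⟩
      refine AddSubgroup.mem_comap.2 ?_
      have h : TensorProduct.map LinearMap.id f.toAddMonoidHom.toIntLinearMap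
          ((op a • m) ⊗ₜ[ℤ] n - m ⊗ₜ[ℤ] (a • n))
          = (op a • m) ⊗ₜ[ℤ] (f n) - m ⊗ₜ[ℤ] (a • f n) := by
        rw [map_sub]
        congr 1
        show m ⊗ₜ[ℤ] (f (a • n)) = m ⊗ₜ[ℤ] (a • f n)
        rw [map_smul]
      rw [LinearMap.toAddMonoidHom_coe, h]
      exact AddSubgroup.subset_closure ⟨a, m, f n, rfl⟩)

lemma mapRight_mk (f : N →ₗ[A] N') (m : M) (n : N) :
    mapRight (M := M) f (mk A m n) = mk A m (f n) := by
  show QuotientAddGroup.mk _ = _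
  rfl

variable {C : Type*} [Ring C] [Module C M] [SMulCommClass C Aᵐᵒᵖ M]

/-- Bundled `C`-linear version of `mapRight`, for the module structure via the left factor. -/
def lmapRight (f : N →ₗ[A] N') : NCT A M N →ₗ[C] NCT A M N' where
  toFun := mapRight f
  map_add' := map_add _
  map_smul' c x := by
    refine QuotientAddGroup.induction_on x (fun z => ?_)
    show (QuotientAddGroup.mk
        (TensorProduct.map LinearMap.id f.toAddMonoidHom.toIntLinearMap (lAux N c z))
        : NCT A M N')
      = (QuotientAddGroup.mk
        (lAux N' c (TensorProduct.map LinearMap.id f.toAddMonoidHom.toIntLinearMap z))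
        : NCT A M N')
    congr 1
    have h : (TensorProduct.map (LinearMap.id : M →ₗ[ℤ] M)
          f.toAddMonoidHom.toIntLinearMap).comp (lAux (M := M) N c)
        = (lAux (M := M) N' c).comp
            (TensorProduct.map (LinearMap.id : M →ₗ[ℤ] M) f.toAddMonoidHom.toIntLinearMap) := by
      apply TensorProduct.ext'
      intro m n
      rfl
    exact LinearMap.congr_fun h z

lemma lmapRight_mk (f : N →ₗ[A] N') (m : M) (n : N) :
    (lmapRight f : NCT A M N →ₗ[C] NCT A M N') (mk A m n) = mk A m (f n) := rfl

end Map

section MapLeft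

variable {M' : Type*} [AddCommGroup M'] [Module Aᵐᵒᵖ M']

/-- Functoriality of the balanced tensor product in the left variable, for a right
`A`-linear map. -/
def mapLeft (g : M →+ M') (hg : ∀ (a : Aᵐᵒᵖ) (m : M), g (a • m) = a • g m) :
    NCT A M N →+ NCT A M' N :=
  QuotientAddGroup.map _ _
    (TensorProduct.map g.toIntLinearMap LinearMap.id).toAddMonoidHom
    (by
      refine (AddSubgroup.closure_le _).2 ?_
      rintro z ⟨a, m, n, rfl⟩
      refine AddSubgroup.mem_comap.2 ?_
      have h : TensorProduct.map g.toIntLinearMap LinearMap.id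
          ((op a • m) ⊗ₜ[ℤ] n - m ⊗ₜ[ℤ] (a • n))
          = (op a • g m) ⊗ₜ[ℤ] n - (g m) ⊗ₜ[ℤ] (a • n) := by
        rw [map_sub]
        congr 1
        show (g (op a • m)) ⊗ₜ[ℤ] n = _
        rw [hg]
      rw [LinearMap.toAddMonoidHom_coe, h]
      exact AddSubgroup.subset_closure ⟨a, g m, n, rfl⟩)

lemma mapLeft_mk (g : M →+ M') (hg : ∀ (a : Aᵐᵒᵖ) (m : M), g (a • m) = a • g m)
    (m : M) (n : N) : mapLeft (N := N) g hg (mk A m n) = mk A (g m) n := by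
  show QuotientAddGroup.mk _ = _
  rfl

end MapLeft

end NCT

end NCTensorLib

/-!
STATEMENT 14: Let `R` be strongly `G`-graded with `A = R₁` (written `ℛ 0`), `T̃` a
`G`-graded `R`-module with identity component `T = T̃₁`, and `M` a `G`-graded
`R`-module.  Then for every `g ∈ G` there is a `k`-module isomorphism (natural in
both variables) `Hom_{R-Gr}(T̃, M(g)) ≅ Hom_A(T, R_g ⊗_A M₁)`, and consequently
`Hom_R(T̃, M) ≅ ⊕_{g ∈ G} Hom_A(T, R_g ⊗_A M₁)` when `T̃` is finitely generated.
-/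

section Statement14

open scoped DirectSum

variable {k R G : Type} [CommRing k] [Ring R] [Algebra k R] [AddGroup G] [DecidableEq G]
variable (ℛ : G → Submodule k R) [SetLike.GradedMonoid ℛ]

/-- A `G`-graded `R`-module which is also a `k`-module (compatibly), graded by
`k`-submodules. -/
structure GrModK where
  carrier : Type
  [acg : AddCommGroup carrier]
  [modk : Module k carrier]
  [modR : Module R carrier]
  [tower : IsScalarTower k R carrier]
  grading : G → Submodule k carrier
  smul_mem' : ∀ {g h : G} {r : R} {m : carrier},
    r ∈ ℛ g → m ∈ grading h → r • m ∈ grading (g + h)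
  internal' : DirectSum.IsInternal grading

attribute [instance] GrModK.acg GrModK.modk GrModK.modR GrModK.tower

namespace GrModK

variable {ℛ}

/-- The identity component `ℛ 0` acts on every component of a graded module. -/
instance instSMulComp (M : GrModK ℛ) (h : G) :
    SMul ↥(ℛ 0) ↥(M.grading h) :=
  ⟨fun a x => ⟨(a : R) • (x : M.carrier), by
    have := M.smul_mem' a.2 x.2; rwa [zero_add] at this⟩⟩

instance instModuleComp (M : GrModK ℛ) (h : G) :
    Module ↥(ℛ 0) ↥(M.grading h) where
  one_smul x := Subtype.ext (one_smul R (x : M.carrier))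
  mul_smul a b x := Subtype.ext (mul_smul (a : R) (b : R) (x : M.carrier))
  smul_zero a := Subtype.ext (smul_zero (a : R))
  smul_add a x y := Subtype.ext (smul_add (a : R) (x : M.carrier) (y : M.carrier))
  add_smul a b x := Subtype.ext (add_smul (a : R) (b : R) (x : M.carrier))
  zero_smul x := Subtype.ext (zero_smul R (x : M.carrier))

instance instSMulCommCompK (M : GrModK ℛ) (h : G) :
    SMulCommClass ↥(ℛ 0) k ↥(M.grading h) :=
  ⟨fun a c x => Subtype.ext (smul_comm (a : R) c (x : M.carrier))⟩

instance instSMulCommCompK' (M : GrModK ℛ) (h : G) :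
    SMulCommClass k ↥(ℛ 0) ↥(M.grading h) :=
  ⟨fun c a x => Subtype.ext (smul_comm c (a : R) (x : M.carrier))⟩

end GrModK

/-- `Hom_{R-Gr}(T̃, M(g))`: the `k`-submodule of `Hom_R(T̃, M)` consisting of the
`R`-linear maps shifting the grading by `g`, i.e. the graded morphisms from `T̃` to
the `g`-suspension `M(g)`. -/
def gradedHomSusp (T' M : GrModK ℛ) (g : G) :
    Submodule k (T'.carrier →ₗ[R] M.carrier) where
  carrier := {f | ∀ (h : G), ∀ x ∈ T'.grading h, f x ∈ M.grading (h + g)}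
  zero_mem' := fun h x _ => by
    simp only [LinearMap.zero_apply]
    exact (M.grading (h + g)).zero_mem
  add_mem' := fun {f₁ f₂} h₁ h₂ h x hx => by
    simp only [LinearMap.add_apply]
    exact (M.grading (h + g)).add_mem (h₁ h x hx) (h₂ h x hx)
  smul_mem' := fun c f hf h x hx => by
    simp only [LinearMap.smul_apply]
    exact (M.grading (h + g)).smul_mem c (hf h x hx)

/-! For each `h`, strong grading gives `1 = ∑ aᵢ bᵢ` with `aᵢ ∈ ℛ h`, `bᵢ ∈ ℛ (-h)`. Every
`x ∈ T̃_h` is then `∑ aᵢ (bᵢ x)` with `bᵢ x ∈ T̃₀`, so a graded map is determined by its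
restriction to `T̃₀`; conversely an `ℛ 0`-linear `α : T̃₀ → M_g` extends to `x ↦ ∑ aᵢ α (bᵢ x)`,
which is `R`-linear because any two splittings of `1` can be compared through `α`. The splitting
in degree `g` also inverts multiplication `ℛ g ⊗_{ℛ 0} M₀ → M_g`, via `x ↦ ∑ aᵢ ⊗ bᵢ x`.
If `T̃` is finitely generated, the degree-`g` parts of an `R`-linear map vanish on a finite set
of homogeneous generators for all but finitely many `g`, so `Hom_R(T̃, M)` is the internal direct
sum of the graded Hom spaces. -/

namespace NCT

open TensorProduct MulOpposite

variable {A : Type*} [Ring A] {M N : Type*} [AddCommGroup M] [AddCommGroup N]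
  [Module Aᵐᵒᵖ M] [Module A N]

lemma induction_on {p : NCT A M N → Prop} (z : NCT A M N) (zero : p 0)
    (mk : ∀ m n, p (mk A m n)) (add : ∀ x y, p x → p y → p (x + y)) : p z := by
  refine QuotientAddGroup.induction_on z fun w => ?_
  induction w using TensorProduct.induction_on with
  | zero => exact zero
  | tmul m n => exact mk m n
  | add x y hx hy => exact add _ _ hx hy

def mkAddMonoidHom (A : Type*) [Ring A] (M N : Type*) [AddCommGroup M] [AddCommGroup N]
    [Module Aᵐᵒᵖ M] [Module A N] : M →+ N →+ NCT A M N :=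
  AddMonoidHom.mk' (fun m => AddMonoidHom.mk' (mk A m) (mk_add_right m))
    fun m m' => AddMonoidHom.ext fun n => mk_add_left m m' n

@[simp] lemma mkAddMonoidHom_apply (m : M) (n : N) : mkAddMonoidHom A M N m n = mk A m n := rfl

variable {P : Type*} [AddCommGroup P]

def lift (β : M →+ N →+ P) (hβ : ∀ (a : A) m n, β (op a • m) n = β m (a • n)) :
    NCT A M N →+ P :=
  QuotientAddGroup.lift _ (TensorProduct.liftAddHom β fun r m n => by
      rw [map_zsmul, AddMonoidHom.zsmul_apply, map_zsmul]) <| by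
    refine (AddSubgroup.closure_le _).2 ?_
    rintro _ ⟨a, m, n, rfl⟩
    simp [hβ]

end NCT

def LinearEquiv.congrRightOfMapSMul {A S P N N' : Type*} [Semiring A] [CommSemiring S]
    [AddCommMonoid P] [AddCommMonoid N] [AddCommMonoid N'] [Module A P] [Module A N]
    [Module A N'] [Module S N] [Module S N'] [SMulCommClass A S N] [SMulCommClass A S N']
    (e : N ≃ₗ[A] N') (he : ∀ (c : S) x, e (c • x) = c • e x) :
    (P →ₗ[A] N) ≃ₗ[S] (P →ₗ[A] N') :=
  { LinearEquiv.arrowCongrAddEquiv (LinearEquiv.refl A P) e with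
    map_smul' := fun c f => LinearMap.ext fun x => he c (f x) }

lemma DirectSum.sum_coe_decompose_of_forall_notMem_eq_zero {ι M σ : Type*} [DecidableEq ι]
    [AddCommMonoid M] [SetLike σ M] [AddSubmonoidClass σ M] (ℳ : ι → σ) [Decomposition ℳ]
    {s : Finset ι} {x : M} (hx : ∀ i ∉ s, decompose ℳ x i = 0) :
    ∑ i ∈ s, (decompose ℳ x i : M) = x := by
  classical
  conv_rhs => rw [← sum_support_decompose ℳ x]
  refine (Finset.sum_subset (fun i hi => ?_) fun i _ hi => ?_).symm
  · by_contra h; exact DFinsupp.mem_support_iff.1 hi (hx i h)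
  · rw [DFinsupp.notMem_support_iff.1 hi, ZeroMemClass.coe_zero]

section UnitSplitting

omit [DecidableEq G]

structure UnitSplitting (g : G) where
  n : ℕ
  left : Fin n → ℛ g
  right : Fin n → ℛ (-g)
  sum_mul_eq_one : ∑ i, (left i : R) * right i = 1

variable {ℛ}

lemma IsStronglyGraded.nonempty_unitSplitting (hstrong : IsStronglyGraded ℛ) (g : G) :
    Nonempty (UnitSplitting ℛ g) := by
  have h1 : (1 : R) ∈ ℛ g * ℛ (-g) := by
    rw [hstrong, add_neg_cancel]; exact SetLike.one_mem_graded ℛ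
  rw [Submodule.mul_eq_span_mul_set, Submodule.mem_span_set'] at h1
  obtain ⟨n, c, z, hz⟩ := h1
  choose x hx y hy hxy using fun i => Set.mem_mul.1 (z i).2
  refine ⟨⟨n, fun i => ⟨c i • x i, (ℛ g).smul_mem _ (hx i)⟩, fun i => ⟨y i, hy i⟩, ?_⟩⟩
  simp only [← hz, ← hxy, smul_mul_assoc]

noncomputable def IsStronglyGraded.unitSplitting (hstrong : IsStronglyGraded ℛ) (g : G) :
    UnitSplitting ℛ g :=
  (hstrong.nonempty_unitSplitting g).some

omit [SetLike.GradedMonoid ℛ] in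
lemma UnitSplitting.sum_smul_smul {g : G} (s : UnitSplitting ℛ g) {N : Type*} [AddCommGroup N]
    [Module R N] (x : N) : ∑ i, (s.left i : R) • (s.right i : R) • x = x := by
  simp only [← mul_smul, ← Finset.sum_smul, s.sum_mul_eq_one, one_smul]

end UnitSplitting

section

variable {ℛ}

namespace GrModK

section

omit [SetLike.GradedMonoid ℛ]

noncomputable instance (M : GrModK ℛ) : DirectSum.Decomposition M.grading :=
  M.internal'.chooseDecomposition

variable (M : GrModK ℛ)

lemma smul_mem_grading_zero {h : G} {b x} (hb : b ∈ ℛ (-h)) (hx : x ∈ M.grading h) :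
    b • x ∈ M.grading 0 := by
  simpa using M.smul_mem' hb hx

def smulToZero {h : G} (b : ℛ (-h)) : M.grading h →+ M.grading 0 :=
  AddMonoidHom.mk' (fun x => ⟨(b : R) • (x : M.carrier), M.smul_mem_grading_zero b.2 x.2⟩)
    fun _ _ => Subtype.ext (smul_add _ _ _)

@[simp] lemma coe_smulToZero {h : G} (b : ℛ (-h)) (x : M.grading h) :
    (M.smulToZero b x : M.carrier) = (b : R) • (x : M.carrier) := rfl

@[simp] lemma coe_smul_grading {h : G} (a : ℛ 0) (x : M.grading h) :
    ((a • x : M.grading h) : M.carrier) = (a : R) • (x : M.carrier) := rfl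

lemma coe_decompose_smul_of_mem {m i j : G} (hij : m + j = i) {r : R} (hr : r ∈ ℛ m)
    (y : M.carrier) : (DirectSum.decompose M.grading (r • y) i : M.carrier)
      = r • (DirectSum.decompose M.grading y j : M.carrier) := by
  subst hij
  induction y using DirectSum.Decomposition.inductionOn M.grading with
  | zero => simp
  | add y z hy hz => simp [smul_add, hy, hz]
  | @homogeneous i y =>
    obtain ⟨y, hy⟩ := y
    by_cases hij : i = j
    · subst hij
      rw [DirectSum.decompose_of_mem_same _ (M.smul_mem' hr hy),
        DirectSum.decompose_of_mem_same _ hy]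
    · rw [DirectSum.decompose_of_mem_ne _ (M.smul_mem' hr hy) (by simpa using hij),
        DirectSum.decompose_of_mem_ne _ hy hij, smul_zero]

variable {N : Type*} [AddCommGroup N]

noncomputable def liftHomogeneous (φ : ∀ h, M.grading h →+ N) : M.carrier →+ N :=
  (DirectSum.toAddMonoid φ).comp (DirectSum.decomposeAddEquiv M.grading).toAddMonoidHom

lemma liftHomogeneous_of_mem (φ : ∀ h, M.grading h →+ N) {h : G} {x : M.carrier}
    (hx : x ∈ M.grading h) : M.liftHomogeneous φ x = φ h ⟨x, hx⟩ := by
  simp [liftHomogeneous, DirectSum.decompose_of_mem _ hx]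

lemma map_smul_of_homogeneous [DirectSum.Decomposition ℛ] [Module R N] (φ : M.carrier →+ N)
    (hφ : ∀ {m h : G} {r : R} {x : M.carrier}, r ∈ ℛ m → x ∈ M.grading h →
      φ (r • x) = r • φ x) (r : R) (x : M.carrier) : φ (r • x) = r • φ x := by
  induction r using DirectSum.Decomposition.inductionOn ℛ with
  | zero => simp
  | add r r' hr hr' => simp [add_smul, hr, hr']
  | homogeneous r =>
    induction x using DirectSum.Decomposition.inductionOn M.grading with
    | zero => simp
    | add x y hx hy => simp [smul_add, hx, hy]
    | homogeneous x => exact hφ r.2 x.2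

lemma exists_finset_homogeneous_span_eq_top (hfin : Module.Finite R M.carrier) :
    ∃ s : Finset (G × M.carrier), (∀ p ∈ s, p.2 ∈ M.grading p.1) ∧
      Submodule.span R (Prod.snd '' (s : Set (G × M.carrier))) = ⊤ := by
  classical
  obtain ⟨S, hS⟩ := hfin.fg_top
  refine ⟨S.biUnion fun y => (DirectSum.decompose M.grading y).support.image
    fun h => (h, (DirectSum.decompose M.grading y h : M.carrier)), ?_, ?_⟩
  · intro p hp
    obtain ⟨y, -, hp⟩ := Finset.mem_biUnion.1 hp
    obtain ⟨h, -, rfl⟩ := Finset.mem_image.1 hp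
    exact (DirectSum.decompose M.grading y h).2
  · refine eq_top_iff.2 (hS ▸ Submodule.span_le.2 fun y hy => ?_)
    rw [SetLike.mem_coe, ← DirectSum.sum_support_decompose M.grading y]
    refine Submodule.sum_mem _ fun h hh => Submodule.subset_span ⟨(h, _), ?_, rfl⟩
    exact Finset.mem_biUnion.2 ⟨y, hy, Finset.mem_image.2 ⟨h, hh, rfl⟩⟩

end

section Multiplication

open MulOpposite

variable (M : GrModK ℛ) (g : G)

def mulMap : NCT (ℛ 0) (ℛ g) (M.grading 0) →ₗ[ℛ 0] M.grading g where
  toFun := NCT.lift (A := ℛ 0)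
    (AddMonoidHom.mk' (fun r : ℛ g => AddMonoidHom.mk'
        (fun m : M.grading 0 => (⟨(r : R) • (m : M.carrier), by
          simpa using M.smul_mem' r.2 m.2⟩ : M.grading g))
        fun _ _ => Subtype.ext (smul_add _ _ _))
      fun _ _ => AddMonoidHom.ext fun _ => Subtype.ext (add_smul _ _ _))
    fun (a : ℛ 0) r m => Subtype.ext (mul_smul (r : R) (a : R) (m : M.carrier))
  map_add' := map_add _
  map_smul' a z := by
    induction z using NCT.induction_on with
    | zero => simp
    | add x y hx hy => simp_all
    | mk r m => exact Subtype.ext (mul_smul (a : R) (r : R) (m : M.carrier))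

@[simp] lemma coe_mulMap_mk (r : ℛ g) (m : M.grading 0) :
    (M.mulMap g (NCT.mk _ r m) : M.carrier) = (r : R) • (m : M.carrier) := rfl

lemma mulMap_smul_base (c : k) (z : NCT (ℛ 0) (ℛ g) (M.grading 0)) :
    M.mulMap g (c • z) = c • M.mulMap g z := by
  induction z using NCT.induction_on with
  | zero => simp
  | add x y hx hy => simp_all
  | mk r m =>
    refine Subtype.ext ?_
    rw [NCT.smul_mk_right, coe_mulMap_mk, SetLike.val_smul, SetLike.val_smul, coe_mulMap_mk,
      smul_comm]

def comulMap (s : UnitSplitting ℛ g) : M.grading g →+ NCT (ℛ 0) (ℛ g) (M.grading 0) :=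
  ∑ i, (NCT.mkAddMonoidHom _ _ _ (s.left i)).comp (M.smulToZero (s.right i))

lemma comulMap_apply (s : UnitSplitting ℛ g) (x : M.grading g) :
    M.comulMap g s x = ∑ i, NCT.mk _ (s.left i) (M.smulToZero (s.right i) x) := by
  simp [comulMap, AddMonoidHom.finsetSum_apply]

lemma mulMap_comulMap (s : UnitSplitting ℛ g) (x : M.grading g) :
    M.mulMap g (M.comulMap g s x) = x :=
  Subtype.ext (by simp [comulMap_apply, s.sum_smul_smul])

lemma comulMap_mulMap (s : UnitSplitting ℛ g) (z : NCT (ℛ 0) (ℛ g) (M.grading 0)) :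
    M.comulMap g s (M.mulMap g z) = z := by
  induction z using NCT.induction_on with
  | zero => simp
  | add x y hx hy => simp_all
  | mk r m =>
    have hbr : ∀ i, (s.right i : R) * r ∈ ℛ 0 := fun i => by
      simpa using SetLike.mul_mem_graded (s.right i).2 r.2
    -- each `bᵢ r` lies in `ℛ 0`, so it can be moved across the tensor sign
    have key : ∀ i, NCT.mk (ℛ 0) (s.left i) (M.smulToZero (s.right i) (M.mulMap g (NCT.mk _ r m)))
        = NCT.mk (ℛ 0) (op (⟨_, hbr i⟩ : ℛ 0) • s.left i) m := fun i => by
      rw [NCT.mk_balanced]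
      congr 1
      exact Subtype.ext (mul_smul _ _ (m : M.carrier)).symm
    have hsum : ∑ i, op (⟨_, hbr i⟩ : ℛ 0) • s.left i = r := Subtype.ext <| by
      simp [← mul_assoc, ← Finset.sum_mul, s.sum_mul_eq_one]
    rw [comulMap_apply, Finset.sum_congr rfl fun i _ => key i]
    conv_rhs => rw [← hsum, ← NCT.mkAddMonoidHom_apply, map_sum, AddMonoidHom.finsetSum_apply]
    rfl

variable {g}

noncomputable def mulEquiv (hstrong : IsStronglyGraded ℛ) :
    NCT (ℛ 0) (ℛ g) (M.grading 0) ≃ₗ[ℛ 0] M.grading g :=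
  { M.mulMap g with
    invFun := M.comulMap g (hstrong.unitSplitting g)
    left_inv := M.comulMap_mulMap g _
    right_inv := M.mulMap_comulMap g _ }

end Multiplication

end GrModK

lemma IsStronglyGraded.linearMap_ext (hstrong : IsStronglyGraded ℛ) {T : GrModK ℛ}
    {N : Type*} [AddCommGroup N] [Module R N] {f₁ f₂ : T.carrier →ₗ[R] N}
    (h : ∀ t ∈ T.grading 0, f₁ t = f₂ t) : f₁ = f₂ := by
  ext x
  induction x using DirectSum.Decomposition.inductionOn T.grading with
  | zero => simp
  | add x y hx hy => simp [hx, hy]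
  | @homogeneous j x =>
    obtain ⟨s⟩ := hstrong.nonempty_unitSplitting j
    rw [← s.sum_smul_smul (x : T.carrier)]
    simp only [map_sum, map_smul, h _ (T.smul_mem_grading_zero (s.right _).2 x.2)]

lemma UnitSplitting.map_smul_eq_sum {T M : GrModK ℛ} {g h : G} (s : UnitSplitting ℛ h)
    (α : T.grading 0 →ₗ[ℛ 0] M.grading g) {c : R} (hc : c ∈ ℛ (-h)) {x : T.carrier}
    (hx : x ∈ T.grading h) :
    (α ⟨c • x, T.smul_mem_grading_zero hc hx⟩ : M.carrier)
      = ∑ i, (c * s.left i) • (α (T.smulToZero (s.right i) ⟨x, hx⟩) : M.carrier) := by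
  have hca : ∀ i, c * s.left i ∈ ℛ 0 := fun i => by
    simpa using SetLike.mul_mem_graded hc (s.left i).2
  have hsum : (⟨c • x, T.smul_mem_grading_zero hc hx⟩ : T.grading 0)
      = ∑ i, (⟨_, hca i⟩ : ℛ 0) • T.smulToZero (s.right i) ⟨x, hx⟩ := Subtype.ext <| by
    simp only [Submodule.coe_sum, GrModK.coe_smul_grading, GrModK.coe_smulToZero, mul_smul,
      ← Finset.smul_sum, s.sum_smul_smul]
  simp [hsum]

namespace gradedHomSusp

variable (T M : GrModK ℛ) (g : G)

def restrict : gradedHomSusp ℛ T M g →ₗ[k] (T.grading 0 →ₗ[ℛ 0] M.grading g) where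
  toFun f :=
    { toFun := fun t => ⟨(f : T.carrier →ₗ[R] M.carrier) t, by simpa using f.2 0 t t.2⟩
      map_add' := fun _ _ => Subtype.ext (map_add _ _ _)
      map_smul' := fun a t => Subtype.ext <|
        map_smul (f : T.carrier →ₗ[R] M.carrier) (a : R) (t : T.carrier) }
  map_add' _ _ := rfl
  map_smul' _ _ := rfl

@[simp] lemma coe_restrict_apply (f : gradedHomSusp ℛ T M g) (t : T.grading 0) :
    (restrict T M g f t : M.carrier) = (f : T.carrier →ₗ[R] M.carrier) t := rfl

lemma restrict_injective (hstrong : IsStronglyGraded ℛ) : Function.Injective (restrict T M g) :=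
  fun _ _ h => Subtype.ext <| hstrong.linearMap_ext fun t ht =>
    congrArg Subtype.val (LinearMap.congr_fun h ⟨t, ht⟩)

variable {T M g}

def extendHomogeneous (α : T.grading 0 →ₗ[ℛ 0] M.grading g) {h : G} (s : UnitSplitting ℛ h) :
    T.grading h →+ M.carrier :=
  AddMonoidHom.mk' (fun x => ∑ i, (s.left i : R) • (α (T.smulToZero (s.right i) x) : M.carrier))
    fun x y => by simp [Finset.sum_add_distrib]

lemma extendHomogeneous_apply (α : T.grading 0 →ₗ[ℛ 0] M.grading g) {h : G}
    (s : UnitSplitting ℛ h) (x : T.grading h) : extendHomogeneous α s x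
      = ∑ i, (s.left i : R) • (α (T.smulToZero (s.right i) x) : M.carrier) := rfl

lemma extendHomogeneous_smul (α : T.grading 0 →ₗ[ℛ 0] M.grading g) {m h : G}
    (s : UnitSplitting ℛ h) (s' : UnitSplitting ℛ (m + h)) {r : R} (hr : r ∈ ℛ m)
    (x : T.grading h) :
    extendHomogeneous α s' ⟨r • x, T.smul_mem' hr x.2⟩ = r • extendHomogeneous α s x := by
  have hbr : ∀ j, (s'.right j : R) * r ∈ ℛ (-h) := fun j => by
    simpa [neg_add_rev] using SetLike.mul_mem_graded (s'.right j).2 hr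
  have hexpand : ∀ j, (α (T.smulToZero (s'.right j) ⟨r • x, T.smul_mem' hr x.2⟩) : M.carrier)
      = ∑ i, ((s'.right j : R) * r * s.left i) • (α (T.smulToZero (s.right i) x) : M.carrier) :=
    fun j => by
      rw [← s.map_smul_eq_sum α (hbr j) x.2]
      congr 2
      exact Subtype.ext (mul_smul _ _ _).symm
  calc extendHomogeneous α s' ⟨r • x, T.smul_mem' hr x.2⟩
      = ∑ i, ∑ j, ((s'.left j : R) * s'.right j * r * s.left i)
          • (α (T.smulToZero (s.right i) x) : M.carrier) := by
        simp only [extendHomogeneous_apply, hexpand, Finset.smul_sum, ← mul_smul, ← mul_assoc]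
        exact Finset.sum_comm
    _ = ∑ i, r • (s.left i : R) • (α (T.smulToZero (s.right i) x) : M.carrier) := by
        refine Finset.sum_congr rfl fun i _ => ?_
        rw [← Finset.sum_smul, ← Finset.sum_mul, ← Finset.sum_mul, s'.sum_mul_eq_one, one_mul,
          mul_smul]
    _ = r • extendHomogeneous α s x := by
        rw [extendHomogeneous_apply, Finset.smul_sum]

noncomputable def extend [DirectSum.Decomposition ℛ] (hstrong : IsStronglyGraded ℛ)
    (α : T.grading 0 →ₗ[ℛ 0] M.grading g) : gradedHomSusp ℛ T M g :=
  ⟨{ T.liftHomogeneous (fun h => extendHomogeneous α (hstrong.unitSplitting h)) with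
      map_smul' := T.map_smul_of_homogeneous _ fun hr hx => by
        simpa [T.liftHomogeneous_of_mem _ hx, T.liftHomogeneous_of_mem _ (T.smul_mem' hr hx)]
          using extendHomogeneous_smul α _ _ hr ⟨_, hx⟩ },
    fun h x hx => by
      show T.liftHomogeneous _ x ∈ _
      rw [T.liftHomogeneous_of_mem _ hx, extendHomogeneous_apply]
      exact Submodule.sum_mem _ fun i _ => M.smul_mem' (UnitSplitting.left _ i).2 (α _).2⟩

lemma restrict_extend [DirectSum.Decomposition ℛ] (hstrong : IsStronglyGraded ℛ)
    (α : T.grading 0 →ₗ[ℛ 0] M.grading g) : restrict T M g (extend hstrong α) = α := by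
  ext t
  have h1 : (1 : R) ∈ ℛ (-0) := by simpa using SetLike.one_mem_graded ℛ
  have := (hstrong.unitSplitting 0).map_smul_eq_sum α h1 t.2
  simp only [one_smul, one_mul] at this
  simpa [extend, T.liftHomogeneous_of_mem _ t.2, extendHomogeneous_apply] using this.symm

variable (T M g)

noncomputable def restrictEquiv [DirectSum.Decomposition ℛ] (hstrong : IsStronglyGraded ℛ) :
    gradedHomSusp ℛ T M g ≃ₗ[k] (T.grading 0 →ₗ[ℛ 0] M.grading g) :=
  LinearEquiv.ofBijective (restrict T M g)
    ⟨restrict_injective T M g hstrong, fun α => ⟨extend hstrong α, restrict_extend hstrong α⟩⟩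

@[simp] lemma restrictEquiv_apply [DirectSum.Decomposition ℛ] (hstrong : IsStronglyGraded ℛ)
    (f : gradedHomSusp ℛ T M g) : restrictEquiv T M g hstrong f = restrict T M g f := rfl

noncomputable def equivHomTensor [DirectSum.Decomposition ℛ] (hstrong : IsStronglyGraded ℛ) :
    gradedHomSusp ℛ T M g ≃ₗ[k] (T.grading 0 →ₗ[ℛ 0] NCT (ℛ 0) (ℛ g) (M.grading 0)) :=
  (restrictEquiv T M g hstrong).trans
    (LinearEquiv.congrRightOfMapSMul (M.mulEquiv hstrong) (M.mulMap_smul_base g)).symm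

end gradedHomSusp

namespace GrModK

open gradedHomSusp

variable [DirectSum.Decomposition ℛ] (hstrong : IsStronglyGraded ℛ) {T M : GrModK ℛ}

noncomputable def restrictComponent (f : T.carrier →ₗ[R] M.carrier) (g : G) :
    T.grading 0 →ₗ[ℛ 0] M.grading g where
  toFun t := DirectSum.decompose M.grading (f t) g
  map_add' _ _ := by simp
  map_smul' a t := Subtype.ext <| by
    simpa using M.coe_decompose_smul_of_mem (zero_add g) a.2 (f t)

noncomputable def gradedPart (f : T.carrier →ₗ[R] M.carrier) (g : G) : gradedHomSusp ℛ T M g :=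
  (restrictEquiv T M g hstrong).symm (restrictComponent f g)

lemma gradedPart_apply_of_mem (f : T.carrier →ₗ[R] M.carrier) (g : G) {h : G} {x : T.carrier}
    (hx : x ∈ T.grading h) :
    (gradedPart hstrong f g : T.carrier →ₗ[R] M.carrier) x
      = DirectSum.decompose M.grading (f x) (h + g) := by
  have hzero : ∀ t (ht : t ∈ T.grading 0), (gradedPart hstrong f g : T.carrier →ₗ[R] M.carrier) t
      = DirectSum.decompose M.grading (f t) g := fun t ht => by
    have := LinearEquiv.apply_symm_apply (restrictEquiv T M g hstrong) (restrictComponent f g)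
    exact congrArg Subtype.val (LinearMap.congr_fun this ⟨t, ht⟩)
  have hshift : ∀ {b : R}, b ∈ ℛ (-h) → (DirectSum.decompose M.grading (b • f x) g : M.carrier)
      = b • DirectSum.decompose M.grading (f x) (h + g) := fun hb => by
    simpa using M.coe_decompose_smul_of_mem (neg_add_cancel_left h g) hb (f x)
  obtain ⟨s⟩ := hstrong.nonempty_unitSplitting h
  conv_lhs => rw [← s.sum_smul_smul x]
  rw [map_sum]
  simp only [map_smul, hzero _ (T.smul_mem_grading_zero (s.right _).2 hx),
    hshift (s.right _).2, s.sum_smul_smul]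

lemma exists_finset_gradedPart_eq_zero (hfin : Module.Finite R T.carrier)
    (f : T.carrier →ₗ[R] M.carrier) : ∃ S : Finset G, ∀ g ∉ S, gradedPart hstrong f g = 0 := by
  classical
  obtain ⟨s, hs, hspan⟩ := T.exists_finset_homogeneous_span_eq_top hfin
  refine ⟨s.biUnion fun p => (DirectSum.decompose M.grading (f p.2)).support.image (-p.1 + ·),
    fun g hg => Subtype.ext (LinearMap.ext_on hspan ?_)⟩
  rintro _ ⟨p, hp, rfl⟩
  rw [gradedPart_apply_of_mem hstrong f g (hs p hp), ZeroMemClass.coe_zero, LinearMap.zero_apply,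
    ZeroMemClass.coe_eq_zero, ← DFinsupp.notMem_support_iff]
  exact fun hmem => hg (Finset.mem_biUnion.2 ⟨p, hp, Finset.mem_image.2 ⟨_, hmem, by simp⟩⟩)

lemma sum_gradedPart (f : T.carrier →ₗ[R] M.carrier) {S : Finset G}
    (hS : ∀ g ∉ S, gradedPart hstrong f g = 0) :
    ∑ g ∈ S, (gradedPart hstrong f g : T.carrier →ₗ[R] M.carrier) = f :=
  hstrong.linearMap_ext fun t ht => by
    have hcomp : ∀ g, (gradedPart hstrong f g : T.carrier →ₗ[R] M.carrier) t
        = DirectSum.decompose M.grading (f t) g := by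
      intro g
      rw [gradedPart_apply_of_mem hstrong f g ht, zero_add]
    rw [LinearMap.sum_apply, Finset.sum_congr rfl fun g _ => hcomp g]
    refine DirectSum.sum_coe_decompose_of_forall_notMem_eq_zero _ fun g hg => ?_
    rw [← ZeroMemClass.coe_eq_zero, ← hcomp, hS g hg, ZeroMemClass.coe_zero, LinearMap.zero_apply]

lemma gradedPart_coeLinearMap (Φ : ⨁ g, gradedHomSusp ℛ T M g) (g : G) :
    gradedPart hstrong (DirectSum.coeLinearMap (gradedHomSusp ℛ T M) Φ) g = Φ g := by
  refine (restrictEquiv T M g hstrong).symm_apply_eq.2 (LinearMap.ext fun t => Subtype.ext ?_)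
  induction Φ using DirectSum.induction_on with
  | zero => simp [restrictComponent]
  | add Φ Ψ hΦ hΨ => simp_all [restrictComponent]
  | of g' f =>
    have hf : (f : T.carrier →ₗ[R] M.carrier) t ∈ M.grading g' := by simpa using f.2 0 t t.2
    by_cases hg : g' = g
    · subst hg
      simp [restrictComponent, DirectSum.decompose_of_mem_same _ hf]
    · rw [DirectSum.of_eq_of_ne _ _ _ (Ne.symm hg)]
      simp [restrictComponent, DirectSum.decompose_of_mem_ne _ hf hg]

end GrModK

open GrModK in
theorem isInternal_gradedHomSusp [DirectSum.Decomposition ℛ] (hstrong : IsStronglyGraded ℛ)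
    {T M : GrModK ℛ} (hfin : Module.Finite R T.carrier) :
    DirectSum.IsInternal (gradedHomSusp ℛ T M) := by
  refine ⟨fun Φ Ψ h => DFinsupp.ext fun g => ?_, fun f => ?_⟩
  · rw [← gradedPart_coeLinearMap hstrong Φ, ← gradedPart_coeLinearMap hstrong Ψ]
    exact congrArg (gradedPart hstrong · g) h
  · obtain ⟨S, hS⟩ := exists_finset_gradedPart_eq_zero hstrong hfin f
    refine ⟨∑ g ∈ S, DirectSum.of _ g (gradedPart hstrong f g), ?_⟩
    rw [map_sum]
    simpa using sum_gradedPart hstrong f hS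

end

theorem graded_hom_iso_hom_conjugate
    [DirectSum.Decomposition ℛ] (hstrong : IsStronglyGraded ℛ)
    (T' M : GrModK ℛ) (g : G) :
    Nonempty (↥(gradedHomSusp ℛ T' M g) ≃ₗ[k]
      (↥(T'.grading 0) →ₗ[↥(ℛ 0)] NCT ↥(ℛ 0) ↥(ℛ g) ↥(M.grading 0))) ∧
    (Module.Finite R T'.carrier →
      Nonempty ((T'.carrier →ₗ[R] M.carrier) ≃ₗ[k]
        ⨁ g' : G, (↥(T'.grading 0) →ₗ[↥(ℛ 0)] NCT ↥(ℛ 0) ↥(ℛ g') ↥(M.grading 0)))) :=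
  ⟨⟨gradedHomSusp.equivHomTensor T' M g hstrong⟩, fun hfin =>
    ⟨(LinearEquiv.ofBijective (DirectSum.coeLinearMap _)
      (isInternal_gradedHomSusp hstrong hfin)).symm.trans
      (DFinsupp.mapRange.linearEquiv fun g' => gradedHomSusp.equivHomTensor T' M g' hstrong)⟩⟩

end Statement14
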